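/- Let 𝒞 be a finite set of constructive □-free formulas and G = BLL+𝒞, where BLL is LJ extended by the rule ◇L (from Γ, A ⇒ B infer Γ, ◇A ⇒ ◇B). Suppose either every G-provable sequent is valid in the irreflexive node frame 𝒦ᵢ, or every G-provable sequent is valid in the reflexive node frame 𝒦ᵣ and G proves (⇒ p → ◇p). Then G has the Visser–Harrop property: whenever G proves Γ, {A_i → B_i}_{i∈I} ⇒ C ∨ D, where Γ is a finite multiset of Harrop □-free formulas and I is a finite (possibly empty) index set of □-free implications, then G proves Γ, {A_i → B_i}_{i∈I} ⇒ C, or Γ, {A_i → B_i}_{i∈I} ⇒ D, or Γ, {A_i → B_i}_{i∈I} ⇒ A_i for some i ∈ I. -/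

import Mathlib

set_option autoImplicit false

namespace UPT

/-- Modal formulas over atoms of type `α` (the language `ℒ = {∧,∨,→,⊤,⊥,□,◇}`). -/
inductive Fml (α : Type) : Type where
  | atom : α → Fml α
  | top  : Fml α
  | bot  : Fml α
  | and  : Fml α → Fml α → Fml α
  | or   : Fml α → Fml α → Fml α
  | imp  : Fml α → Fml α → Fml α
  | box  : Fml α → Fml α
  | dia  : Fml α → Fml α
deriving DecidableEq

variable {α β : Type}

/-- Simultaneous substitution of formulas for atoms. -/
def Fml.subst (σ : β → Fml α) : Fml β → Fml α
  | .atom b  => σ b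
  | .top     => .top
  | .bot     => .bot
  | .and A B => .and (A.subst σ) (B.subst σ)
  | .or A B  => .or (A.subst σ) (B.subst σ)
  | .imp A B => .imp (A.subst σ) (B.subst σ)
  | .box A   => .box (A.subst σ)
  | .dia A   => .dia (A.subst σ)

/-- A sequent: a finite multiset antecedent together with a succedent
containing at most one formula. -/
abbrev Seq (α : Type) : Type := Multiset (Fml α) × Option (Fml α)

/-- A rule set relates a (finite) list of premise sequents to a conclusion sequent. -/
abbrev RuleSet (α : Type) : Type := List (Seq α) → Seq α → Prop

/-- The axioms and rules of the single-conclusion sequent calculus `LJ`, stated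
schematically: they are closed under substituting arbitrary formulas for atoms
and arbitrary multisets (resp. succedents) for the context variables. -/
inductive LJRule : List (Seq α) → Seq α → Prop where
  | id (Γ : Multiset (Fml α)) (A : Fml α) : LJRule [] (A ::ₘ Γ, some A)
  | botL (Γ : Multiset (Fml α)) (Δ : Option (Fml α)) : LJRule [] (.bot ::ₘ Γ, Δ)
  | topR (Γ : Multiset (Fml α)) : LJRule [] (Γ, some .top)
  | wL (A : Fml α) (Γ : Multiset (Fml α)) (Δ : Option (Fml α)) :
      LJRule [(Γ, Δ)] (A ::ₘ Γ, Δ)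
  | wR (A : Fml α) (Γ : Multiset (Fml α)) : LJRule [(Γ, none)] (Γ, some A)
  | cL (A : Fml α) (Γ : Multiset (Fml α)) (Δ : Option (Fml α)) :
      LJRule [(A ::ₘ A ::ₘ Γ, Δ)] (A ::ₘ Γ, Δ)
  | cut (A : Fml α) (Γ : Multiset (Fml α)) (Δ : Option (Fml α)) :
      LJRule [(Γ, some A), (A ::ₘ Γ, Δ)] (Γ, Δ)
  | andL₁ (A B : Fml α) (Γ : Multiset (Fml α)) (Δ : Option (Fml α)) :
      LJRule [(A ::ₘ Γ, Δ)] (.and A B ::ₘ Γ, Δ)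
  | andL₂ (A B : Fml α) (Γ : Multiset (Fml α)) (Δ : Option (Fml α)) :
      LJRule [(B ::ₘ Γ, Δ)] (.and A B ::ₘ Γ, Δ)
  | andR (A B : Fml α) (Γ : Multiset (Fml α)) :
      LJRule [(Γ, some A), (Γ, some B)] (Γ, some (.and A B))
  | orL (A B : Fml α) (Γ : Multiset (Fml α)) (Δ : Option (Fml α)) :
      LJRule [(A ::ₘ Γ, Δ), (B ::ₘ Γ, Δ)] (.or A B ::ₘ Γ, Δ)
  | orR₁ (A B : Fml α) (Γ : Multiset (Fml α)) : LJRule [(Γ, some A)] (Γ, some (.or A B))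
  | orR₂ (A B : Fml α) (Γ : Multiset (Fml α)) : LJRule [(Γ, some B)] (Γ, some (.or A B))
  | impL (A B : Fml α) (Γ : Multiset (Fml α)) (Δ : Option (Fml α)) :
      LJRule [(Γ, some A), (B ::ₘ Γ, Δ)] (.imp A B ::ₘ Γ, Δ)
  | impR (A B : Fml α) (Γ : Multiset (Fml α)) :
      LJRule [(A ::ₘ Γ, some B)] (Γ, some (.imp A B))

/-- The rule `K_□`: from `Γ ⇒ A` infer `□Γ ⇒ □A`. -/
inductive KBoxRule : List (Seq α) → Seq α → Prop where
  | mk (Γ : Multiset (Fml α)) (A : Fml α) :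
      KBoxRule [(Γ, some A)] (Γ.map Fml.box, some (.box A))

/-- The rule `K_◇`: from `Γ, A ⇒ B` infer `□Γ, ◇A ⇒ ◇B`. -/
inductive KDiaRule : List (Seq α) → Seq α → Prop where
  | mk (Γ : Multiset (Fml α)) (A B : Fml α) :
      KDiaRule [(A ::ₘ Γ, some B)] (.dia A ::ₘ Γ.map Fml.box, some (.dia B))

/-- The rule `◇L`: from `Γ, A ⇒ B` infer `Γ, ◇A ⇒ ◇B`. -/
inductive DiaLRule : List (Seq α) → Seq α → Prop where
  | mk (Γ : Multiset (Fml α)) (A B : Fml α) :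
      DiaLRule [(A ::ₘ Γ, some B)] (.dia A ::ₘ Γ, some (.dia B))

/-- Adding a set `Ax` of axioms to a calculus: the initial sequents `⇒ σ(A)`
for every substitution instance `σ(A)` of every `A ∈ Ax`. -/
def axRule (Ax : Fml α → Prop) : RuleSet α := fun ps c =>
  ps = [] ∧ ∃ (A : Fml α) (σ : α → Fml α), Ax A ∧ c = ((0 : Multiset (Fml α)), some (A.subst σ))

/-- Using a set of sequents as additional initial sequents (assumptions). -/
def hypRule (H : Set (Seq α)) : RuleSet α := fun ps c => ps = [] ∧ c ∈ H

/-- The sequent calculus `LJ+Ax`. -/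
def LJSys (Ax : Fml α → Prop) : RuleSet α := fun ps c => LJRule ps c ∨ axRule Ax ps c

/-- The sequent calculus `CK+Ax = LJ + K_□ + K_◇ + Ax`. -/
def CKSys (Ax : Fml α → Prop) : RuleSet α := fun ps c =>
  LJRule ps c ∨ KBoxRule ps c ∨ KDiaRule ps c ∨ axRule Ax ps c

/-- The sequent calculus `CK_□+Ax = LJ + K_□ + Ax`. -/
def CKBoxSys (Ax : Fml α → Prop) : RuleSet α := fun ps c =>
  LJRule ps c ∨ KBoxRule ps c ∨ axRule Ax ps c

/-- The sequent calculus `BLL+Ax = LJ + ◇L + Ax`. -/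
def BLLSys (Ax : Fml α → Prop) : RuleSet α := fun ps c =>
  LJRule ps c ∨ DiaLRule ps c ∨ axRule Ax ps c

/-- Provability of a sequent in the calculus generated by a rule set. -/
inductive Derives (R : RuleSet α) : Multiset (Fml α) → Option (Fml α) → Prop where
  | step {ps : List (Seq α)} {c : Seq α} (hr : R ps c)
      (hp : ∀ p ∈ ps, Derives R p.1 p.2) : Derives R c.1 c.2

/-- Basic formulas: generated from atoms, `⊤`, `⊥` by `∧`, `∨`, `◇`. -/
inductive Basic : Fml α → Prop where
  | atom (a : α) : Basic (.atom a)
  | top : Basic (.top : Fml α)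
  | bot : Basic (.bot : Fml α)
  | and {A B : Fml α} : Basic A → Basic B → Basic (.and A B)
  | or {A B : Fml α} : Basic A → Basic B → Basic (.or A B)
  | dia {A : Fml α} : Basic A → Basic (.dia A)

/-- Almost positive formulas: generated from basic formulas by `∧`, `∨`, `□`, `◇`
and implications `A → B` with `A` basic and `B` almost positive. -/
inductive AlmostPos : Fml α → Prop where
  | basic {A : Fml α} : Basic A → AlmostPos A
  | and {A B : Fml α} : AlmostPos A → AlmostPos B → AlmostPos (.and A B)
  | or {A B : Fml α} : AlmostPos A → AlmostPos B → AlmostPos (.or A B)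
  | box {A : Fml α} : AlmostPos A → AlmostPos (.box A)
  | dia {A : Fml α} : AlmostPos A → AlmostPos (.dia A)
  | imp {A B : Fml α} : Basic A → AlmostPos B → AlmostPos (.imp A B)

/-- Constructive formulas: generated from basic formulas by `∧`, `□` and
implications `A → B` with `A` almost positive and `B` constructive. -/
inductive Constructive : Fml α → Prop where
  | basic {A : Fml α} : Basic A → Constructive A
  | and {A B : Fml α} : Constructive A → Constructive B → Constructive (.and A B)
  | box {A : Fml α} : Constructive A → Constructive (.box A)
  | imp {A B : Fml α} : AlmostPos A → Constructive B → Constructive (.imp A B)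

/-- Harrop formulas: atoms, `⊥`, `⊤`, closed under `∧`, `□`, and implications
`A → B` with `A` arbitrary and `B` Harrop. -/
inductive Harrop : Fml α → Prop where
  | atom (a : α) : Harrop (.atom a)
  | top : Harrop (.top : Fml α)
  | bot : Harrop (.bot : Fml α)
  | and {A B : Fml α} : Harrop A → Harrop B → Harrop (.and A B)
  | box {A : Fml α} : Harrop A → Harrop (.box A)
  | imp (A : Fml α) {B : Fml α} : Harrop B → Harrop (.imp A B)

/-- Conjunction of a list of formulas (`⋀∅ = ⊤`). -/
def conj : List (Fml α) → Fml α
  | [] => .top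
  | [A] => A
  | A :: B :: l => .and A (conj (B :: l))

/-- Disjunction of a list of formulas (`⋁∅ = ⊥`). -/
def disj : List (Fml α) → Fml α
  | [] => .bot
  | [A] => A
  | A :: B :: l => .or A (disj (B :: l))

/-- Disjunction of a succedent (at most one formula; `⋁∅ = ⊥`). -/
def odisj : Option (Fml α) → Fml α
  | none => .bot
  | some A => A

/-- The multiset `{A_i → B_i}_{i ∈ I}` of implications of an indexed family. -/
def imps (AB : List (Fml α × Fml α)) : Multiset (Fml α) :=
  ↑(AB.map fun p => Fml.imp p.1 p.2)

/-- The conjunction `⋀_{i∈I} (A_i → B_i)` of an indexed family of implications. -/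
def impConj (AB : List (Fml α × Fml α)) : Fml α :=
  conj (AB.map fun p => Fml.imp p.1 p.2)

/-- Truth in the one-node *irreflexive* frame `𝒦ᵢ` under a Boolean valuation:
`□A` is always true and `◇A` is always false; the propositional connectives
are evaluated classically. -/
def evalI (v : α → Bool) : Fml α → Bool
  | .atom a  => v a
  | .top     => true
  | .bot     => false
  | .and A B => evalI v A && evalI v B
  | .or A B  => evalI v A || evalI v B
  | .imp A B => !evalI v A || evalI v B
  | .box _   => true
  | .dia _   => false

/-- Truth in the one-node *reflexive* frame `𝒦ᵣ` under a Boolean valuation: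
`□A` and `◇A` take the value of `A`. -/
def evalR (v : α → Bool) : Fml α → Bool
  | .atom a  => v a
  | .top     => true
  | .bot     => false
  | .and A B => evalR v A && evalR v B
  | .or A B  => evalR v A || evalR v B
  | .imp A B => !evalR v A || evalR v B
  | .box A   => evalR v A
  | .dia A   => evalR v A

/-- Validity of a sequent with respect to a one-node semantics: under every
valuation, if all formulas of the antecedent are true then so is the succedent. -/
def SeqValid (ev : (α → Bool) → Fml α → Bool) (Γ : Multiset (Fml α)) (Δ : Option (Fml α)) :
    Prop :=
  ∀ v : α → Bool, (∀ A ∈ Γ, ev v A = true) → ∃ B ∈ Δ, ev v B = true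

/-- `CK+Ax` is T-free: every provable sequent is valid in the irreflexive node frame. -/
def TFree (Ax : Fml α → Prop) : Prop :=
  ∀ (Γ : Multiset (Fml α)) (Δ : Option (Fml α)), Derives (CKSys Ax) Γ Δ → SeqValid evalI Γ Δ

/-- `CK+Ax` is T-full: every provable sequent is valid in the reflexive node
frame and the calculus proves `⇒ □p → p` and `⇒ p → ◇p`. -/
def TFull (Ax : Fml α → Prop) : Prop :=
  (∀ (Γ : Multiset (Fml α)) (Δ : Option (Fml α)), Derives (CKSys Ax) Γ Δ → SeqValid evalR Γ Δ) ∧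
  (∀ a : α, Derives (CKSys Ax) 0 (some (.imp (.box (.atom a)) (.atom a)))) ∧
  (∀ a : α, Derives (CKSys Ax) 0 (some (.imp (.atom a) (.dia (.atom a)))))

/-- Classical validity of a (modality-free) sequent: `⋀Γ → ⋁Δ` is true under
every Boolean valuation of the atoms. -/
def ClValid (Γ : Multiset (Fml α)) (Δ : Option (Fml α)) : Prop :=
  ∀ v : α → Bool, (∀ A ∈ Γ, evalI v A = true) → ∃ B ∈ Δ, evalI v B = true

/-- Nonempty conjunctions of atoms. -/
inductive AtomConj : Fml α → Prop where
  | single (a : α) : AtomConj (.atom a)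
  | and {A B : Fml α} : AtomConj A → AtomConj B → AtomConj (.and A B)

/-- Implicational Horn formulas: `⊥`, atoms, and implications `⋀Q → r` with `Q`
a nonempty multiset of atoms and `r` an atom or `⊥`. -/
inductive ImpHorn : Fml α → Prop where
  | bot : ImpHorn (.bot : Fml α)
  | atom (a : α) : ImpHorn (.atom a)
  | impAtom {A : Fml α} (hA : AtomConj A) (a : α) : ImpHorn (.imp A (.atom a))
  | impBot {A : Fml α} (hA : AtomConj A) : ImpHorn (.imp A .bot)

/-- Formulas of the form `◇^n p` with `p` an atom and `n ≥ 0`. -/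
inductive DiaPowAtom : Fml α → Prop where
  | atom (a : α) : DiaPowAtom (.atom a)
  | dia {A : Fml α} : DiaPowAtom A → DiaPowAtom (.dia A)

/-- Nonempty conjunctions `⋀_{i=1}^k ◇^{n_i} p_i` of formulas `◇^{n_i} p_i`. -/
inductive DiaConj : Fml α → Prop where
  | single {A : Fml α} : DiaPowAtom A → DiaConj A
  | and {A B : Fml α} : DiaConj A → DiaConj B → DiaConj (.and A B)

/-- Modal Horn formulas: `⊥` and atoms, closed under `□` and under implications
`A → B` with `A = ⋀_{i=1}^k ◇^{n_i} p_i` and `B` modal Horn. -/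
inductive ModalHorn : Fml α → Prop where
  | bot : ModalHorn (.bot : Fml α)
  | atom (a : α) : ModalHorn (.atom a)
  | box {A : Fml α} : ModalHorn A → ModalHorn (.box A)
  | imp {A B : Fml α} : DiaConj A → ModalHorn B → ModalHorn (.imp A B)

/-- The predicate "all atoms of the formula satisfy `P`". -/
def Fml.AtomsIn (P : α → Prop) : Fml α → Prop
  | .atom a  => P a
  | .top     => True
  | .bot     => True
  | .and A B => A.AtomsIn P ∧ B.AtomsIn P
  | .or A B  => A.AtomsIn P ∧ B.AtomsIn P
  | .imp A B => A.AtomsIn P ∧ B.AtomsIn P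
  | .box A   => A.AtomsIn P
  | .dia A   => A.AtomsIn P

/-- No `◇` occurs in the formula. -/
def Fml.DiaFree : Fml α → Prop
  | .atom _  => True
  | .top     => True
  | .bot     => True
  | .and A B => A.DiaFree ∧ B.DiaFree
  | .or A B  => A.DiaFree ∧ B.DiaFree
  | .imp A B => A.DiaFree ∧ B.DiaFree
  | .box A   => A.DiaFree
  | .dia _   => False

/-- No `□` occurs in the formula. -/
def Fml.BoxFree : Fml α → Prop
  | .atom _  => True
  | .top     => True
  | .bot     => True
  | .and A B => A.BoxFree ∧ B.BoxFree
  | .or A B  => A.BoxFree ∧ B.BoxFree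
  | .imp A B => A.BoxFree ∧ B.BoxFree
  | .box _   => False
  | .dia A   => A.BoxFree

/-- The formula is modality-free (propositional). -/
def Fml.ModFree : Fml α → Prop
  | .atom _  => True
  | .top     => True
  | .bot     => True
  | .and A B => A.ModFree ∧ B.ModFree
  | .or A B  => A.ModFree ∧ B.ModFree
  | .imp A B => A.ModFree ∧ B.ModFree
  | .box _   => False
  | .dia _   => False

/-- An angling of the language: an injection `φ ↦ ⟨φ⟩` from formulas into the
atoms whose image (the angled atoms) is disjoint from a fixed infinite set of
plain atoms. -/
structure Angling (α : Type) where
  angle : Fml α → α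
  plain : Set α
  inj : Function.Injective angle
  plain_infinite : plain.Infinite
  disjoint : ∀ φ : Fml α, angle φ ∉ plain

/-- `a` is an angled atom. -/
def Angling.Angled (S : Angling α) (a : α) : Prop := ∃ φ : Fml α, S.angle φ = a

/-- The translation `t`: `⊥^t = ⊥`, `p^t = ⟨p⟩`, `⊤^t = ⟨⊤⟩`,
`(A ∘ B)^t = (A^t ∘ B^t) ∧ ⟨A ∘ B⟩` and `(○A)^t = (○A^t) ∧ ⟨○A⟩`. -/
def Angling.tr (S : Angling α) : Fml α → Fml α
  | .atom a  => .atom (S.angle (.atom a))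
  | .top     => .atom (S.angle .top)
  | .bot     => .bot
  | .and A B => .and (.and (S.tr A) (S.tr B)) (.atom (S.angle (.and A B)))
  | .or A B  => .and (.or (S.tr A) (S.tr B)) (.atom (S.angle (.or A B)))
  | .imp A B => .and (.imp (S.tr A) (S.tr B)) (.atom (S.angle (.imp A B)))
  | .box A   => .and (.box (S.tr A)) (.atom (S.angle (.box A)))
  | .dia A   => .and (.dia (S.tr A)) (.atom (S.angle (.dia A)))

/-- Action of the standard substitution on atoms: an angled atom `⟨φ⟩` is sent
to `φ`; plain atoms are fixed. -/
noncomputable def Angling.stdAtom (S : Angling α) (a : α) : Fml α :=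
  haveI := Classical.propDecidable (∃ φ : Fml α, S.angle φ = a)
  if h : ∃ φ : Fml α, S.angle φ = a then h.choose else .atom a

/-- The standard substitution `s`: replaces each angled atom `⟨φ⟩` by `φ`,
fixes the plain atoms, and commutes with all connectives. -/
noncomputable def Angling.std (S : Angling α) : Fml α → Fml α :=
  Fml.subst S.stdAtom

/-- The Visser–Harrop property of a calculus. -/
def VisserHarrop (R : RuleSet α) : Prop :=
  ∀ (Γ : Multiset (Fml α)), (∀ A ∈ Γ, Harrop A) →
  ∀ (AB : List (Fml α × Fml α)) (C D : Fml α),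
    Derives R (Γ + imps AB) (some (.or C D)) →
    Derives R (Γ + imps AB) (some C) ∨
    Derives R (Γ + imps AB) (some D) ∨
    ∃ p ∈ AB, Derives R (Γ + imps AB) (some p.1)

/-- The disjunction property of a calculus. -/
def DisjProp (R : RuleSet α) : Prop :=
  ∀ C D : Fml α, Derives R 0 (some (.or C D)) →
    Derives R 0 (some C) ∨ Derives R 0 (some D)

/-- The formula interpretation `I(Γ ⇒ Δ) = ⋀Γ → ⋁Δ` belongs to `L` (stated for
every enumeration of the antecedent multiset as a list). -/
def interpIn (L : Set (Fml α)) (s : Seq α) : Prop :=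
  ∀ l : List (Fml α), (↑l : Multiset (Fml α)) = s.1 → Fml.imp (conj l) (odisj s.2) ∈ L

/- Named modal axioms (with `p := atom 0`, `q := atom 1`). -/
def axTa : Fml ℕ := .imp (.box (.atom 0)) (.atom 0)
def axTb : Fml ℕ := .imp (.atom 0) (.dia (.atom 0))
def axBa : Fml ℕ := .imp (.dia (.box (.atom 0))) (.atom 0)
def axBb : Fml ℕ := .imp (.atom 0) (.box (.dia (.atom 0)))
def ax4a : Fml ℕ := .imp (.box (.atom 0)) (.box (.box (.atom 0)))
def ax4b : Fml ℕ := .imp (.dia (.dia (.atom 0))) (.dia (.atom 0))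
def ax5a : Fml ℕ := .imp (.dia (.box (.atom 0))) (.box (.atom 0))
def ax5b : Fml ℕ := .imp (.dia (.atom 0)) (.box (.dia (.atom 0)))
def axDiaBot : Fml ℕ := .imp (.dia .bot) .bot
def axDiaOr : Fml ℕ :=
  .imp (.dia (.or (.atom 0) (.atom 1))) (.or (.dia (.atom 0)) (.dia (.atom 1)))
def axBoxImp : Fml ℕ :=
  .imp (.imp (.dia (.atom 0)) (.box (.atom 1))) (.box (.imp (.atom 0) (.atom 1)))

/-- The axioms of `X ⊆ {T, B, 4, 5}` in both their `a`- and `b`-versions. -/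
def XAxioms (tT tB t4 t5 : Bool) : Set (Fml ℕ) :=
  (if tT then ({axTa, axTb} : Set (Fml ℕ)) else ∅) ∪
  (if tB then ({axBa, axBb} : Set (Fml ℕ)) else ∅) ∪
  (if t4 then ({ax4a, ax4b} : Set (Fml ℕ)) else ∅) ∪
  (if t5 then ({ax5a, ax5b} : Set (Fml ℕ)) else ∅)

/-- The additional axioms of `IK` over `CK`. -/
def IKExtra : Set (Fml ℕ) := {axDiaBot, axDiaOr, axBoxImp}

/-- The right rule with premises `{Γ, φ̄_i ⇒ ψ̄_i}_{i∈I}` and conclusion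
`Γ, θ̄ ⇒ η̄`, closed under all substitutions of formulas for atoms and
multisets for the context `Γ`. -/
def rightRuleInst (prems : List (List (Fml α) × Option (Fml α)))
    (θ : List (Fml α)) (η : Option (Fml α)) : RuleSet α := fun ps c =>
  ∃ (σ : α → Fml α) (Γ : Multiset (Fml α)),
    ps = prems.map (fun pr =>
        ((Γ + ↑(pr.1.map (Fml.subst σ)) : Multiset (Fml α)), pr.2.map (Fml.subst σ))) ∧
    c = ((Γ + ↑(θ.map (Fml.subst σ)) : Multiset (Fml α)), η.map (Fml.subst σ))

/-- The left rule with premises `{Γ, φ̄_i ⇒ ψ̄_i}_{i∈I} ∪ {Γ, θ̄_j ⇒ Δ}_{j∈J}`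
and conclusion `Γ, η̄ ⇒ Δ`, closed under all substitutions of formulas for
atoms and multisets for `Γ` and `Δ`. -/
def leftRuleInst (prems : List (List (Fml α) × Option (Fml α)))
    (lefts : List (List (Fml α))) (η : List (Fml α)) : RuleSet α := fun ps c =>
  ∃ (σ : α → Fml α) (Γ : Multiset (Fml α)) (Δ : Option (Fml α)),
    ps = prems.map (fun pr =>
          ((Γ + ↑(pr.1.map (Fml.subst σ)) : Multiset (Fml α)), pr.2.map (Fml.subst σ)))
        ++ lefts.map (fun θj => ((Γ + ↑(θj.map (Fml.subst σ)) : Multiset (Fml α)), Δ)) ∧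
    c = ((Γ + ↑(η.map (Fml.subst σ)) : Multiset (Fml α)), Δ)

/-- The formula `Ax_R` of a right rule. -/
def AxRight (prems : List (List (Fml α) × Option (Fml α)))
    (θ : List (Fml α)) (η : Option (Fml α)) : Fml α :=
  .imp (.and (conj (prems.map fun pr => .imp (conj pr.1) (odisj pr.2))) (conj θ)) (odisj η)

/-- The formula `Ax_R` of a left rule. -/
def AxLeft (prems : List (List (Fml α) × Option (Fml α)))
    (lefts : List (List (Fml α))) (η : List (Fml α)) : Fml α :=
  .imp (.and (conj (prems.map fun pr => .imp (conj pr.1) (odisj pr.2))) (conj η))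
    (disj (lefts.map conj))

/-- The forgetful translation `f_i`: fixes atoms, `⊤`, `⊥`, commutes with
`∧`, `∨`, `→`, `□`, and sends every `◇A` to `⊥`. -/
def fi : Fml α → Fml α
  | .atom a  => .atom a
  | .top     => .top
  | .bot     => .bot
  | .and A B => .and (fi A) (fi B)
  | .or A B  => .or (fi A) (fi B)
  | .imp A B => .imp (fi A) (fi B)
  | .box A   => .box (fi A)
  | .dia _   => .bot

/-- The forgetful translation `f_r`: fixes atoms, `⊤`, `⊥`, commutes with
`∧`, `∨`, `→`, `□`, and sends `◇A` to `f_r A`. -/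
def fr : Fml α → Fml α
  | .atom a  => .atom a
  | .top     => .top
  | .bot     => .bot
  | .and A B => .and (fr A) (fr B)
  | .or A B  => .or (fr A) (fr B)
  | .imp A B => .imp (fr A) (fr B)
  | .box A   => .box (fr A)
  | .dia A   => fr A


/-!
Use Aczel's slash relative to the context `Θ = Γ, {A_i → B_i}`: `Θ | A` requires derivability
from `Θ` at atoms, boxes and implications, reads `∨` disjunctively, and treats `◇` as the one-node frame
does (`◇A` is never slashed over `𝒦ᵢ`, and is slashed like `A` over `𝒦ᵣ`, where `⊢ A → ◇A` keeps
slashed formulas derivable). Every rule of `BLL` preserves the slash. For an axiom instance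
`σ(A)` let `u(p)` say whether `Θ | σ(p)`: validity at the node, applied to the `⊤`/`⊥`-instance of
`A` read off `u`, makes `A` true under `u`; on basic formulas `Θ | σ(B)` is exactly truth of `B`
under `u`, so a true, derivable, constructive `□`-free instance is slashed. If `Θ` is consistent
and proves no `A_i`, every formula of `Θ` is slashed (Harrop formulas because they are derivable,
the `A_i → B_i` vacuously), hence so is `C ∨ D`, which yields `Θ ⊢ C` or `Θ ⊢ D`.
-/

class ExtendsLJ (R : RuleSet α) : Prop where
  of_LJRule : ∀ {ps : List (Seq α)} {c : Seq α}, LJRule ps c → R ps c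

instance {Ax : Fml α → Prop} : ExtendsLJ (BLLSys Ax) := ⟨Or.inl⟩

namespace Derives

section Structural

variable {R : RuleSet α} [ExtendsLJ R] {Γ Θ : Multiset (Fml α)} {Δ : Option (Fml α)}
  {A B : Fml α}

theorem ofLJ₀ {c : Seq α} (h : LJRule [] c) : Derives R c.1 c.2 :=
  step (ExtendsLJ.of_LJRule h) (by simp)

theorem ofLJ₁ {p c : Seq α} (h : LJRule [p] c) (hp : Derives R p.1 p.2) : Derives R c.1 c.2 :=
  step (ExtendsLJ.of_LJRule h) (by simpa using hp)

theorem ofLJ₂ {p q c : Seq α} (h : LJRule [p, q] c) (hp : Derives R p.1 p.2)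
    (hq : Derives R q.1 q.2) : Derives R c.1 c.2 :=
  step (ExtendsLJ.of_LJRule h) (by simp [hp, hq])

theorem weaken (Ξ : Multiset (Fml α)) (h : Derives R Γ Δ) : Derives R (Ξ + Γ) Δ := by
  induction Ξ using Multiset.induction with
  | empty => simpa using h
  | cons A Ξ ih => rw [Multiset.cons_add]; exact ofLJ₁ (LJRule.wL A _ Δ) ih

theorem of_zero (Θ : Multiset (Fml α)) (h : Derives R 0 Δ) : Derives R Θ Δ := by
  simpa using weaken Θ h

theorem of_mem (h : A ∈ Θ) : Derives R Θ (some A) := by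
  obtain ⟨Θ, rfl⟩ := Multiset.exists_cons_of_mem h
  exact ofLJ₀ (LJRule.id Θ A)

theorem cut (hA : Derives R Θ (some A)) (h : Derives R (A ::ₘ Θ) Δ) : Derives R Θ Δ :=
  ofLJ₂ (LJRule.cut A Θ Δ) hA h

theorem bot_elim (h : Derives R Θ (some .bot)) : Derives R Θ Δ :=
  cut h (ofLJ₀ (LJRule.botL Θ Δ))

theorem top_intro : Derives R Θ (some .top) := ofLJ₀ (LJRule.topR Θ)

theorem and_intro (hA : Derives R Θ (some A)) (hB : Derives R Θ (some B)) :
    Derives R Θ (some (.and A B)) :=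
  ofLJ₂ (LJRule.andR A B Θ) hA hB

theorem or_inl (h : Derives R Θ (some A)) : Derives R Θ (some (.or A B)) :=
  ofLJ₁ (LJRule.orR₁ A B Θ) h

theorem or_inr (h : Derives R Θ (some B)) : Derives R Θ (some (.or A B)) :=
  ofLJ₁ (LJRule.orR₂ A B Θ) h

theorem and_left (h : Derives R Θ (some (.and A B))) : Derives R Θ (some A) :=
  cut h (ofLJ₁ (LJRule.andL₁ A B Θ _) (of_mem (Multiset.mem_cons_self _ _)))

theorem and_right (h : Derives R Θ (some (.and A B))) : Derives R Θ (some B) :=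
  cut h (ofLJ₁ (LJRule.andL₂ A B Θ _) (of_mem (Multiset.mem_cons_self _ _)))

theorem mp (h : Derives R Θ (some (.imp A B))) (hA : Derives R Θ (some A)) :
    Derives R Θ (some B) :=
  cut h (ofLJ₂ (LJRule.impL A B Θ _) hA (of_mem (Multiset.mem_cons_self _ _)))

theorem cut_context (h : Derives R Γ Δ) (hΓ : ∀ A ∈ Γ, Derives R Θ (some A)) :
    Derives R Θ Δ := by
  suffices ∀ Ξ : Multiset (Fml α), (∀ A ∈ Ξ, Derives R Θ (some A)) →
      Derives R (Θ + Ξ) Δ → Derives R Θ Δ from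
    this Γ hΓ (by simpa [add_comm] using weaken Θ h)
  intro Ξ
  induction Ξ using Multiset.induction with
  | empty => simp
  | cons A Ξ ih =>
    intro hΞ h
    rw [Multiset.forall_mem_cons] at hΞ
    rw [Multiset.add_cons] at h
    exact ih hΞ.2 (cut (by simpa [add_comm] using weaken Ξ hΞ.1) h)

end Structural

end Derives

theorem Fml.subst_subst {γ : Type} (σ : β → Fml α) (τ : γ → Fml β) (A : Fml γ) :
    (A.subst τ).subst σ = A.subst fun c => (τ c).subst σ := by
  induction A <;> simp [Fml.subst, *]

def Seq.subst (σ : α → Fml α) (s : Seq α) : Seq α :=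
  (s.1.map (Fml.subst σ), s.2.map (Fml.subst σ))

theorem LJRule.subst (σ : α → Fml α) {ps : List (Seq α)} {c : Seq α} (h : LJRule ps c) :
    LJRule (ps.map (Seq.subst σ)) (Seq.subst σ c) := by
  cases h <;> simp only [Seq.subst, List.map_cons, List.map_nil, Multiset.map_cons,
    Option.map_some, Option.map_none, Fml.subst] <;> constructor

theorem DiaLRule.subst (σ : α → Fml α) {ps : List (Seq α)} {c : Seq α} (h : DiaLRule ps c) :
    DiaLRule (ps.map (Seq.subst σ)) (Seq.subst σ c) := by
  cases h
  simpa [Seq.subst, Fml.subst] using DiaLRule.mk _ _ _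

theorem axRule.subst {Ax : Fml α → Prop} (σ : α → Fml α) {ps : List (Seq α)} {c : Seq α}
    (h : axRule Ax ps c) : axRule Ax (ps.map (Seq.subst σ)) (Seq.subst σ c) := by
  obtain ⟨rfl, A, τ, hA, rfl⟩ := h
  exact ⟨rfl, A, fun a => (τ a).subst σ, hA, by simp [Seq.subst, Fml.subst_subst]⟩

theorem BLLSys.subst {Ax : Fml α → Prop} (σ : α → Fml α) {ps : List (Seq α)} {c : Seq α}
    (h : BLLSys Ax ps c) : BLLSys Ax (ps.map (Seq.subst σ)) (Seq.subst σ c) :=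
  h.imp (LJRule.subst σ) (Or.imp (DiaLRule.subst σ) (axRule.subst σ))

theorem Derives.subst {R : RuleSet α} (σ : α → Fml α)
    (hR : ∀ {ps : List (Seq α)} {c : Seq α}, R ps c → R (ps.map (Seq.subst σ)) (Seq.subst σ c))
    {Γ : Multiset (Fml α)} {Δ : Option (Fml α)} (h : Derives R Γ Δ) :
    Derives R (Γ.map (Fml.subst σ)) (Δ.map (Fml.subst σ)) := by
  induction h with
  | step hr _ ih =>
    refine Derives.step (hR hr) ?_
    simp only [List.mem_map]
    rintro _ ⟨p, hp, rfl⟩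
    exact ih p hp

def evalNode (refl : Bool) (v : α → Bool) : Fml α → Bool
  | .atom a  => v a
  | .top     => true
  | .bot     => false
  | .and A B => evalNode refl v A && evalNode refl v B
  | .or A B  => evalNode refl v A || evalNode refl v B
  | .imp A B => !evalNode refl v A || evalNode refl v B
  | .box A   => !refl || evalNode refl v A
  | .dia A   => refl && evalNode refl v A

theorem evalNode_false : evalNode false = (evalI : (α → Bool) → Fml α → Bool) := by
  funext v A
  induction A <;> simp [evalNode, evalI, *]

theorem evalNode_true : evalNode true = (evalR : (α → Bool) → Fml α → Bool) := by
  funext v A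
  induction A <;> simp [evalNode, evalR, *]

theorem evalNode_subst (refl : Bool) (v : α → Bool) (τ : β → Fml α) (A : Fml β) :
    evalNode refl v (A.subst τ) = evalNode refl (fun b => evalNode refl v (τ b)) A := by
  induction A <;> simp [Fml.subst, evalNode, *]

def Fml.ofBool : Bool → Fml α
  | true => .top
  | false => .bot

theorem evalNode_ofBool (refl : Bool) (v : α → Bool) (b : Bool) :
    evalNode refl v (Fml.ofBool b) = b := by
  cases b <;> rfl

def Slash (R : RuleSet α) (Θ : Multiset (Fml α)) (refl : Bool) : Fml α → Prop
  | .atom a  => Derives R Θ (some (.atom a))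
  | .top     => True
  | .bot     => False
  | .and A B => Slash R Θ refl A ∧ Slash R Θ refl B
  | .or A B  => Slash R Θ refl A ∨ Slash R Θ refl B
  | .imp A B => Derives R Θ (some (.imp A B)) ∧ (Slash R Θ refl A → Slash R Θ refl B)
  | .box A   => Derives R Θ (some (.box A))
  | .dia A   => refl = true ∧ Slash R Θ refl A

def SlashValid (R : RuleSet α) (Θ : Multiset (Fml α)) (refl : Bool) (Γ : Multiset (Fml α))
    (Δ : Option (Fml α)) : Prop :=
  (∀ A ∈ Γ, Slash R Θ refl A) → ∃ B ∈ Δ, Slash R Θ refl B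

namespace Slash

variable {R : RuleSet α} {Θ : Multiset (Fml α)} {refl : Bool}

theorem derives [ExtendsLJ R]
    (hdia : refl = true → ∀ A : Fml α, Derives R 0 (some (.imp A (.dia A)))) {A : Fml α}
    (h : Slash R Θ refl A) : Derives R Θ (some A) := by
  induction A with
  | atom => exact h
  | top => exact Derives.top_intro
  | bot => exact h.elim
  | and A B ihA ihB => exact Derives.and_intro (ihA h.1) (ihB h.2)
  | or A B ihA ihB => exact h.elim (fun h => (ihA h).or_inl) (fun h => (ihB h).or_inr)
  | imp => exact h.1
  | box => exact h
  | dia A ih => exact (Derives.of_zero Θ (hdia h.1 A)).mp (ih h.2)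

theorem of_harrop [ExtendsLJ R]
    (hdia : refl = true → ∀ A : Fml α, Derives R 0 (some (.imp A (.dia A))))
    (hcons : ¬ Derives R Θ (some .bot)) {H : Fml α} (hH : Harrop H)
    (h : Derives R Θ (some H)) : Slash R Θ refl H := by
  induction hH with
  | atom => exact h
  | top => trivial
  | bot => exact hcons h
  | and _ _ ihA ihB => exact ⟨ihA h.and_left, ihB h.and_right⟩
  | box => exact h
  | imp A _ ih => exact ⟨h, fun hA => ih (h.mp (derives hdia hA))⟩

section Instance

variable {σ : α → Fml α} {u : α → Bool}

theorem subst_iff_of_basic (hu : ∀ a, u a = true ↔ Slash R Θ refl (σ a)) {B : Fml α}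
    (hB : Basic B) : Slash R Θ refl (B.subst σ) ↔ evalNode refl u B = true := by
  induction hB with
  | atom a => exact (hu a).symm
  | top => simp [Slash, Fml.subst, evalNode]
  | bot => simp [Slash, Fml.subst, evalNode]
  | and _ _ ihA ihB => simp [Slash, Fml.subst, evalNode, ihA, ihB]
  | or _ _ ihA ihB => simp [Slash, Fml.subst, evalNode, ihA, ihB]
  | dia _ ih => simp [Slash, Fml.subst, evalNode, ih]

theorem evalNode_of_almostPos (hu : ∀ a, u a = true ↔ Slash R Θ refl (σ a)) {A : Fml α}
    (hA : AlmostPos A) (hbox : A.BoxFree) (h : Slash R Θ refl (A.subst σ)) :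
    evalNode refl u A = true := by
  induction hA with
  | basic hB => exact (subst_iff_of_basic hu hB).1 h
  | and _ _ ihA ihB => simp [evalNode, ihA hbox.1 h.1, ihB hbox.2 h.2]
  | or _ _ ihA ihB =>
    simpa [evalNode] using h.imp (ihA hbox.1) (ihB hbox.2)
  | box => exact hbox.elim
  | dia _ ih => simpa [evalNode, h.1] using ih hbox h.2
  | imp hB _ ih =>
    rw [evalNode, Bool.or_eq_true, Bool.not_eq_true', ← Bool.not_eq_true, ← imp_iff_not_or]
    exact fun hev => ih hbox.2 (h.2 ((subst_iff_of_basic hu hB).2 hev))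

theorem of_constructive [ExtendsLJ R]
    (hdia : refl = true → ∀ A : Fml α, Derives R 0 (some (.imp A (.dia A))))
    (hu : ∀ a, u a = true ↔ Slash R Θ refl (σ a)) {E : Fml α} (hE : Constructive E)
    (hbox : E.BoxFree) (hev : evalNode refl u E = true) (h : Derives R Θ (some (E.subst σ))) :
    Slash R Θ refl (E.subst σ) := by
  induction hE with
  | basic hB => exact (subst_iff_of_basic hu hB).2 hev
  | and _ _ ihA ihB =>
    simp only [evalNode, Bool.and_eq_true] at hev
    exact ⟨ihA hbox.1 hev.1 h.and_left, ihB hbox.2 hev.2 h.and_right⟩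
  | box => exact h
  | imp hA _ ih =>
    refine ⟨h, fun hsA => ih hbox.2 ?_ (h.mp (derives hdia hsA))⟩
    simpa [evalNode, evalNode_of_almostPos hu hA hbox.1 hsA] using hev

end Instance

end Slash

section Soundness

variable {R : RuleSet α} {Θ : Multiset (Fml α)} {refl : Bool}

theorem LJRule.slashValid [ExtendsLJ R]
    (hdia : refl = true → ∀ A : Fml α, Derives R 0 (some (.imp A (.dia A))))
    {ps : List (Seq α)} {c : Seq α} (h : LJRule ps c) (hder : ∀ p ∈ ps, Derives R p.1 p.2)
    (ih : ∀ p ∈ ps, SlashValid R Θ refl p.1 p.2) : SlashValid R Θ refl c.1 c.2 := by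
  cases h <;> simp only [List.forall_mem_cons, List.not_mem_nil, IsEmpty.forall_iff,
    implies_true, and_true] at hder ih
  case impR A B Γ =>
    have hAB : Derives R Γ (some (.imp A B)) := Derives.ofLJ₁ (LJRule.impR A B Γ) hder
    simp only [SlashValid, Multiset.forall_mem_cons, Option.mem_def, Option.some_inj,
      exists_eq_left'] at ih ⊢
    exact fun hΓ => ⟨hAB.cut_context fun C hC => (hΓ C hC).derives hdia, fun hA => ih ⟨hA, hΓ⟩⟩
  all_goals simp_all [SlashValid, Slash]
  all_goals tauto

theorem DiaLRule.slashValid {ps : List (Seq α)} {c : Seq α} (h : DiaLRule ps c)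
    (ih : ∀ p ∈ ps, SlashValid R Θ refl p.1 p.2) : SlashValid R Θ refl c.1 c.2 := by
  cases h
  cases refl <;> simp_all [SlashValid, Slash]

end Soundness

section BLL

variable {Ax : Fml α → Prop} {refl : Bool}

theorem Derives.axiom_instance {A : Fml α} (hA : Ax A) (σ : α → Fml α) :
    Derives (BLLSys Ax) 0 (some (A.subst σ)) :=
  Derives.step (c := (0, some _)) (Or.inr (Or.inr ⟨rfl, A, σ, hA, rfl⟩)) (by simp)

theorem evalNode_of_axiom
    (hsem : ∀ Γ Δ, Derives (BLLSys Ax) Γ Δ → SeqValid (evalNode refl) Γ Δ)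
    {A : Fml α} (hA : Ax A) (u : α → Bool) : evalNode refl u A = true := by
  obtain ⟨B, hB, hBu⟩ := hsem _ _ (Derives.axiom_instance hA (Fml.ofBool ∘ u)) u (by simp)
  rw [Option.mem_def, Option.some_inj] at hB
  subst hB
  simpa [evalNode_subst, evalNode_ofBool] using hBu

theorem axRule.slashValid (hAx : ∀ A, Ax A → Constructive A ∧ A.BoxFree)
    (hdia : refl = true → ∀ A : Fml α, Derives (BLLSys Ax) 0 (some (.imp A (.dia A))))
    (hsem : ∀ Γ Δ, Derives (BLLSys Ax) Γ Δ → SeqValid (evalNode refl) Γ Δ)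
    {Θ : Multiset (Fml α)} {ps : List (Seq α)} {c : Seq α} (h : axRule Ax ps c) :
    SlashValid (BLLSys Ax) Θ refl c.1 c.2 := by
  classical
  obtain ⟨rfl, A, σ, hA, rfl⟩ := h
  intro _
  let u : α → Bool := fun a => decide (Slash (BLLSys Ax) Θ refl (σ a))
  exact ⟨A.subst σ, rfl, Slash.of_constructive hdia (u := u) (by simp [u]) (hAx A hA).1
    (hAx A hA).2 (evalNode_of_axiom hsem hA u) ((Derives.axiom_instance hA σ).of_zero Θ)⟩

theorem Derives.slashValid (hAx : ∀ A, Ax A → Constructive A ∧ A.BoxFree)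
    (hdia : refl = true → ∀ A : Fml α, Derives (BLLSys Ax) 0 (some (.imp A (.dia A))))
    (hsem : ∀ Γ Δ, Derives (BLLSys Ax) Γ Δ → SeqValid (evalNode refl) Γ Δ)
    {Θ Γ : Multiset (Fml α)} {Δ : Option (Fml α)} (h : Derives (BLLSys Ax) Γ Δ) :
    SlashValid (BLLSys Ax) Θ refl Γ Δ := by
  induction h with
  | step hr hder ih =>
    rcases hr with hr | hr | hr
    · exact hr.slashValid hdia hder ih
    · exact hr.slashValid ih
    · exact hr.slashValid hAx hdia hsem

theorem visserHarrop_BLLSys (hAx : ∀ A, Ax A → Constructive A ∧ A.BoxFree)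
    (hdia : refl = true → ∀ A : Fml α, Derives (BLLSys Ax) 0 (some (.imp A (.dia A))))
    (hsem : ∀ Γ Δ, Derives (BLLSys Ax) Γ Δ → SeqValid (evalNode refl) Γ Δ) :
    VisserHarrop (BLLSys Ax) := by
  intro Γ hΓ AB C D h
  set Θ := Γ + imps AB
  by_cases hAB : ∃ p ∈ AB, Derives (BLLSys Ax) Θ (some p.1)
  · exact Or.inr (Or.inr hAB)
  by_cases hcons : Derives (BLLSys Ax) Θ (some .bot)
  · exact Or.inl hcons.bot_elim
  have hslash : ∀ A ∈ Θ, Slash (BLLSys Ax) Θ refl A := by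
    intro A hA
    rcases Multiset.mem_add.mp hA with hA' | hA'
    · exact Slash.of_harrop hdia hcons (hΓ A hA') (Derives.of_mem hA)
    · obtain ⟨p, hp, rfl⟩ := List.mem_map.mp hA'
      exact ⟨Derives.of_mem hA, fun h1 => (hAB ⟨p, hp, h1.derives hdia⟩).elim⟩
  obtain ⟨_, ⟨⟩, hCD⟩ := h.slashValid hAx hdia hsem hslash
  exact (hCD.imp (Slash.derives hdia) (Slash.derives hdia)).imp_right Or.inl

end BLL

theorem statement_18_general (CS : Finset (Fml ℕ)) (hCS : ∀ A ∈ CS, Constructive A ∧ A.BoxFree)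
    (hTF : (∀ (Γ : Multiset (Fml ℕ)) (Δ : Option (Fml ℕ)),
              Derives (BLLSys (· ∈ CS)) Γ Δ → SeqValid evalI Γ Δ) ∨
           ((∀ (Γ : Multiset (Fml ℕ)) (Δ : Option (Fml ℕ)),
              Derives (BLLSys (· ∈ CS)) Γ Δ → SeqValid evalR Γ Δ) ∧
            (∀ n : ℕ, Derives (BLLSys (· ∈ CS)) 0
              (some (.imp (.atom n) (.dia (.atom n)))))))
    (Γ : Multiset (Fml ℕ)) (hΓ : ∀ A ∈ Γ, Harrop A ∧ A.BoxFree)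
    (AB : List (Fml ℕ × Fml ℕ))
    (C D : Fml ℕ)
    (h : Derives (BLLSys (· ∈ CS)) (Γ + imps AB) (some (.or C D))) :
    Derives (BLLSys (· ∈ CS)) (Γ + imps AB) (some C) ∨
    Derives (BLLSys (· ∈ CS)) (Γ + imps AB) (some D) ∨
    ∃ p ∈ AB, Derives (BLLSys (· ∈ CS)) (Γ + imps AB) (some p.1) := by
  obtain ⟨refl, hdia, hsem⟩ : ∃ refl : Bool,
      (refl = true → ∀ A : Fml ℕ, Derives (BLLSys (· ∈ CS)) 0 (some (.imp A (.dia A)))) ∧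
      ∀ Γ Δ, Derives (BLLSys (· ∈ CS)) Γ Δ → SeqValid (evalNode refl) Γ Δ := by
    rcases hTF with hvalid | ⟨hvalid, hdia⟩
    · exact ⟨false, nofun, evalNode_false ▸ hvalid⟩
    · refine ⟨true, fun _ A => ?_, evalNode_true ▸ hvalid⟩
      simpa [Fml.subst] using (hdia 0).subst (fun _ => A) (BLLSys.subst _)
  exact visserHarrop_BLLSys hCS hdia hsem Γ (fun A hA => (hΓ A hA).1) AB C D h

/-- any T-free or T-full calculus `BLL+𝒞` with `𝒞` a finite set
of constructive □-free formulas has the Visser–Harrop property (over the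
□-free fragment). -/
theorem statement_18 (CS : Finset (Fml ℕ)) (hCS : ∀ A ∈ CS, Constructive A ∧ A.BoxFree)
    (hTF : (∀ (Γ : Multiset (Fml ℕ)) (Δ : Option (Fml ℕ)),
              Derives (BLLSys (· ∈ CS)) Γ Δ → SeqValid evalI Γ Δ) ∨
           ((∀ (Γ : Multiset (Fml ℕ)) (Δ : Option (Fml ℕ)),
              Derives (BLLSys (· ∈ CS)) Γ Δ → SeqValid evalR Γ Δ) ∧
            (∀ n : ℕ, Derives (BLLSys (· ∈ CS)) 0
              (some (.imp (.atom n) (.dia (.atom n)))))))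
    (Γ : Multiset (Fml ℕ)) (hΓ : ∀ A ∈ Γ, Harrop A ∧ A.BoxFree)
    (AB : List (Fml ℕ × Fml ℕ)) (hAB : ∀ p ∈ AB, p.1.BoxFree ∧ p.2.BoxFree)
    (C D : Fml ℕ) (hC : C.BoxFree) (hD : D.BoxFree)
    (h : Derives (BLLSys (· ∈ CS)) (Γ + imps AB) (some (.or C D))) :
    Derives (BLLSys (· ∈ CS)) (Γ + imps AB) (some C) ∨
    Derives (BLLSys (· ∈ CS)) (Γ + imps AB) (some D) ∨
    ∃ p ∈ AB, Derives (BLLSys (· ∈ CS)) (Γ + imps AB) (some p.1) :=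
  statement_18_general CS hCS hTF Γ hΓ AB C D h

end UPT
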